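/- Fix M ≥ 1, complex numbers q_{m,j} for m, j ∈ {1,…,M}, and σ > 0. For each m let c_m = Σ_{j≠m} |q_{m,j}|² + σ², Γ_m = |q_{m,m}|²/c_m, and for δ ∈ ℂ let e_m(δ) = |1 − δ·q_{m,m}|² + |δ|²·c_m. Then the infimum over δ ∈ ℂ^M and ω ∈ (0,∞)^M of Σ_{m=1}^M (ω_m·e_m(δ_m) − log ω_m − 1) equals −Σ_{m=1}^M log(1 + Γ_m), and it is attained. -/

import Mathlib

/-!
For fixed `e > 0` the weight term `ω e - log ω - 1` is minimised at `ω = e⁻¹` with value `log e`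
(this is `log x ≤ x - 1`). Completing the square in `δ` gives
`e_m(δ) = (1 + Γ_m)⁻¹ + (c_m + |q_mm|²) |δ - δ_m^*|²` with the MMSE receiver
`δ_m^* = conj q_mm / (c_m + |q_mm|²)`, so the joint minimum of each summand is
`log (1 + Γ_m)⁻¹`, attained at `δ_m^*` and `ω_m = 1 + Γ_m`; the users decouple.
-/

open Finset ComplexConjugate

noncomputable def mse (a : ℂ) (c : ℝ) (δ : ℂ) : ℝ := ‖1 - δ * a‖ ^ 2 + ‖δ‖ ^ 2 * c

noncomputable def mmseReceiver (a : ℂ) (c : ℝ) : ℂ := conj a / (c + ‖a‖ ^ 2 : ℝ)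

section
variable {a : ℂ} {c : ℝ}

theorem mse_complete_square (hc : 0 < c) (δ : ℂ) :
    mse a c δ = (1 + ‖a‖ ^ 2 / c)⁻¹ + (c + ‖a‖ ^ 2) * ‖δ - mmseReceiver a c‖ ^ 2 := by
  have hs : c + (a.re ^ 2 + a.im ^ 2) ≠ 0 := by positivity
  simp only [mse, mmseReceiver, Complex.sq_norm, Complex.normSq_apply, Complex.sub_re,
    Complex.sub_im, Complex.mul_re, Complex.mul_im, Complex.div_re, Complex.div_im,
    Complex.conj_re, Complex.conj_im, Complex.ofReal_re, Complex.ofReal_im, Complex.one_re,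
    Complex.one_im]
  field_simp
  ring

theorem inv_one_add_le_mse (hc : 0 < c) (δ : ℂ) : (1 + ‖a‖ ^ 2 / c)⁻¹ ≤ mse a c δ := by
  rw [mse_complete_square hc]
  exact le_add_of_nonneg_right (by positivity)

theorem mse_mmseReceiver (hc : 0 < c) : mse a c (mmseReceiver a c) = (1 + ‖a‖ ^ 2 / c)⁻¹ := by
  simp [mse_complete_square hc]

end

theorem Real.log_le_mul_sub_log_sub_one {x ω : ℝ} (hx : 0 < x) (hω : 0 < ω) :
    Real.log x ≤ ω * x - Real.log ω - 1 := by
  have := Real.log_le_sub_one_of_pos (mul_pos hω hx)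
  rw [Real.log_mul hω.ne' hx.ne'] at this
  linarith

theorem neg_log_one_add_le_weighted_mse {a : ℂ} {c ω : ℝ} (hc : 0 < c) (hω : 0 < ω) (δ : ℂ) :
    -Real.log (1 + ‖a‖ ^ 2 / c) ≤ ω * mse a c δ - Real.log ω - 1 := by
  have hpos : 0 < (1 + ‖a‖ ^ 2 / c)⁻¹ := by positivity
  calc -Real.log (1 + ‖a‖ ^ 2 / c) = Real.log (1 + ‖a‖ ^ 2 / c)⁻¹ := (Real.log_inv _).symm
    _ ≤ Real.log (mse a c δ) := Real.log_le_log hpos (inv_one_add_le_mse hc δ)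
    _ ≤ ω * mse a c δ - Real.log ω - 1 :=
      Real.log_le_mul_sub_log_sub_one (hpos.trans_le (inv_one_add_le_mse hc δ)) hω

theorem weighted_mse_mmseReceiver {a : ℂ} {c : ℝ} (hc : 0 < c) :
    (1 + ‖a‖ ^ 2 / c) * mse a c (mmseReceiver a c) - Real.log (1 + ‖a‖ ^ 2 / c) - 1 =
      -Real.log (1 + ‖a‖ ^ 2 / c) := by
  have : 1 + ‖a‖ ^ 2 / c ≠ 0 := by positivity
  rw [mse_mmseReceiver hc, mul_inv_cancel₀ this]
  ring

theorem stmt_3_general (M : ℕ) (q : Fin M → Fin M → ℂ) (σ : ℝ) (hσ : 0 < σ)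
    (c : Fin M → ℝ)
    (hc : ∀ m, c m = ∑ j ∈ univ.erase m, ‖q m j‖ ^ 2 + σ ^ 2)
    (Γ : Fin M → ℝ) (hΓ : ∀ m, Γ m = ‖q m m‖ ^ 2 / c m)
    (e : Fin M → ℂ → ℝ)
    (he : ∀ m δ, e m δ = ‖1 - δ * q m m‖ ^ 2 + ‖δ‖ ^ 2 * c m) :
    ∃ (δs : Fin M → ℂ) (ωs : Fin M → ℝ),
      (∀ m, 0 < ωs m) ∧
      (∑ m, (ωs m * e m (δs m) - Real.log (ωs m) - 1)) = -∑ m, Real.log (1 + Γ m) ∧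
      ∀ (δ : Fin M → ℂ) (ω : Fin M → ℝ), (∀ m, 0 < ω m) →
        -∑ m, Real.log (1 + Γ m) ≤ ∑ m, (ω m * e m (δ m) - Real.log (ω m) - 1) := by
  have hc_pos (m : Fin M) : 0 < c m := by
    rw [hc]; exact add_pos_of_nonneg_of_pos (sum_nonneg fun _ _ => by positivity) (by positivity)
  obtain rfl : e = fun m => mse (q m m) (c m) := by ext m δ; exact he m δ
  obtain rfl : Γ = fun m => ‖q m m‖ ^ 2 / c m := funext hΓ
  refine ⟨fun m => mmseReceiver (q m m) (c m), fun m => 1 + ‖q m m‖ ^ 2 / c m,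
    fun m => by have := hc_pos m; positivity, ?_, fun δ ω hω => ?_⟩
  · rw [← sum_neg_distrib]
    exact sum_congr rfl fun m _ => weighted_mse_mmseReceiver (hc_pos m)
  · rw [← sum_neg_distrib]
    exact sum_le_sum fun m _ => neg_log_one_add_le_weighted_mse (hc_pos m) (hω m) (δ m)

/-- Fixed `M ≥ 1`, coefficients `q m j`, noise `σ > 0`: with
`c m = ∑_{j≠m} |q m j|² + σ²`, `Γ m = |q m m|²/c m`, and
`e_m(δ) = |1 − δ·q m m|² + |δ|²·c m`, the infimum over `δ ∈ ℂ^M` and `ω ∈ (0,∞)^M` of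
`∑ m (ω m · e_m(δ m) − log (ω m) − 1)` equals `−∑ m log(1 + Γ m)` and is attained. -/
theorem stmt_3 (M : ℕ) (hM : 1 ≤ M) (q : Fin M → Fin M → ℂ) (σ : ℝ) (hσ : 0 < σ)
    (c : Fin M → ℝ)
    (hc : ∀ m, c m = ∑ j ∈ univ.erase m, ‖q m j‖ ^ 2 + σ ^ 2)
    (Γ : Fin M → ℝ) (hΓ : ∀ m, Γ m = ‖q m m‖ ^ 2 / c m)
    (e : Fin M → ℂ → ℝ)
    (he : ∀ m δ, e m δ = ‖1 - δ * q m m‖ ^ 2 + ‖δ‖ ^ 2 * c m) :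
    ∃ (δs : Fin M → ℂ) (ωs : Fin M → ℝ),
      (∀ m, 0 < ωs m) ∧
      (∑ m, (ωs m * e m (δs m) - Real.log (ωs m) - 1)) = -∑ m, Real.log (1 + Γ m) ∧
      ∀ (δ : Fin M → ℂ) (ω : Fin M → ℝ), (∀ m, 0 < ω m) →
        -∑ m, Real.log (1 + Γ m) ≤ ∑ m, (ω m * e m (δ m) - Real.log (ω m) - 1) :=
  stmt_3_general M q σ hσ c hc Γ hΓ e he
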